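/- arXiv:1706.02840 — 3 statements merged into one kernel-verified Lean document; each statement's English description precedes it below -/
import Mathlib

section
/- Let n ≥ 2 and m ≥ 1 be integers, let q, p be complex polynomials with deg q = n and deg p ≤ n, let γ ≠ 0 be the leading coefficient of q, and suppose the Lens polynomial ℓ(z) = (conj z)·q(z) − p(z) has exactly k roots α_1, …, α_k, all simple. For t ∈ ℂ, t ≠ 0, define φ_t(z) = (((t·conj z + γ)^m − γ^m)/(γ^{m−1}·m·t))·q(z) − p(z). Then for every δ > 0 smaller than half the minimal distance between distinct α_j, there exists ε > 0 such that for every t ∈ ℂ with 0 < |t| < ε and every j ∈ {1, …, k}, the function φ_t has exactly one root in the closed disk {z : |z − α_j| ≤ δ}, this root is simple, and its sign equals the sign of the root α_j of ℓ. -/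
open Complex Polynomial

/-- The Lens polynomial associated to complex polynomials `q, p`:
`z ↦ conj z * q(z) - p(z)`. -/
noncomputable def lensFun (q p : Polynomial ℂ) : ℂ → ℂ :=
  fun z => (starRingEnd ℂ) z * q.eval z - p.eval z

/-- `α` is a simple root of `f : ℂ → ℂ` if `f α = 0` and the real Fréchet
derivative of `f` at `α` is invertible. -/
def IsSimpleRoot (f : ℂ → ℂ) (α : ℂ) : Prop :=
  f α = 0 ∧ Function.Bijective ⇑(fderiv ℝ f α)

/-- The determinant of the real Fréchet derivative of `f : ℂ → ℂ` at `α`.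
Its sign is the sign of the root `α`. -/
noncomputable def fderivDet (f : ℂ → ℂ) (α : ℂ) : ℝ :=
  LinearMap.det (fderiv ℝ f α).toLinearMap

/-- The member `φ_t` of the bifurcation family of a Lens polynomial inside the
class of generalized Lens polynomials, where `γ` is the leading coefficient
of `q`. -/
noncomputable def phiFam (q p : Polynomial ℂ) (m : ℕ) (t : ℂ) : ℂ → ℂ :=
  fun z =>
    (((t * (starRingEnd ℂ) z + q.leadingCoeff) ^ m - q.leadingCoeff ^ m) /
        (q.leadingCoeff ^ (m - 1) * m * t)) * q.eval z - p.eval z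

/-
Expanding `(t w + γ)^m - γ^m` as `t w · ∑_{i<m} (t w + γ)^i γ^(m-1-i)` cancels the factor
`t`, so `φ_t(z) = Ψ(t, z)` for a map `Ψ : ℂ × ℂ → ℂ`, smooth over `ℝ`, with `Ψ(0, ·) = ℓ`.
At a simple root `α_j` of `ℓ` the implicit function theorem gives, for small `t`, exactly one
root of `Ψ(t, ·)` near `α_j`, and continuity of the Jacobian determinant preserves its sign.
That root is the only one in the whole `δ`-disk: `ℓ` has no root on the compact annulus between
that neighbourhood and the `δ`-circle, hence neither has `Ψ(t, ·)` for small `t`.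
-/
open Filter Topology Metric Finset
open scoped ComplexConjugate

theorem ContinuousAt.eventually_sign_eq {X : Type*} [TopologicalSpace X] {f : X → ℝ} {x : X}
    (hf : ContinuousAt f x) (hx : f x ≠ 0) :
    ∀ᶠ y in 𝓝 x, Real.sign (f y) = Real.sign (f x) := by
  rcases hx.lt_or_gt with hneg | hpos
  · filter_upwards [hf.eventually (gt_mem_nhds hneg)] with y hy
    rw [Real.sign_of_neg hy, Real.sign_of_neg hneg]
  · filter_upwards [hf.eventually (lt_mem_nhds hpos)] with y hy
    rw [Real.sign_of_pos hy, Real.sign_of_pos hpos]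

theorem IsCompact.eventually_forall_apply_ne {X Y Z : Type*} [TopologicalSpace X]
    [TopologicalSpace Y] [TopologicalSpace Z] [T1Space Z] {f : X × Y → Z} (hf : Continuous f)
    {K : Set Y} (hK : IsCompact K) {x₀ : X} {c : Z} (hK₀ : ∀ y ∈ K, f (x₀, y) ≠ c) :
    ∀ᶠ x in 𝓝 x₀, ∀ y ∈ K, f (x, y) ≠ c :=
  hK.eventually_forall_of_forall_eventually fun y hy =>
    hf.continuousAt.eventually_ne (hK₀ y hy)

theorem fderiv_comp_prodMk_right {𝕜 E₁ E₂ F : Type*} [NontriviallyNormedField 𝕜]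
    [NormedAddCommGroup E₁] [NormedSpace 𝕜 E₁] [NormedAddCommGroup E₂] [NormedSpace 𝕜 E₂]
    [NormedAddCommGroup F] [NormedSpace 𝕜 F] {f : E₁ × E₂ → F} {x : E₁} {y : E₂}
    (hf : DifferentiableAt 𝕜 f (x, y)) :
    fderiv 𝕜 (fun w => f (x, w)) y = fderiv 𝕜 f (x, y) ∘L .inr 𝕜 E₁ E₂ :=
  (hf.hasFDerivAt.comp y (hasFDerivAt_prodMk_right x y)).fderiv

theorem isSimpleRoot_iff_fderivDet_ne_zero {f : ℂ → ℂ} {α : ℂ} :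
    IsSimpleRoot f α ↔ f α = 0 ∧ fderivDet f α ≠ 0 := by
  rw [IsSimpleRoot, fderivDet, ← isUnit_iff_ne_zero, ← LinearMap.isUnit_iff_isUnit_det,
    Module.End.isUnit_iff]
  rfl

theorem IsSimpleRoot.of_sign_fderivDet_eq {f g : ℂ → ℂ} {a z : ℂ} (hg : IsSimpleRoot g a)
    (hz : f z = 0) (hsign : Real.sign (fderivDet f z) = Real.sign (fderivDet g a)) :
    IsSimpleRoot f z := by
  refine isSimpleRoot_iff_fderivDet_ne_zero.2 ⟨hz, fun h => ?_⟩
  apply (isSimpleRoot_iff_fderivDet_ne_zero.1 hg).2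
  rwa [← Real.sign_eq_zero_iff, ← hsign, Real.sign_eq_zero_iff]

section Persistence

variable {P E : Type*} [NormedAddCommGroup P] [NormedSpace ℝ P] [CompleteSpace P]
  [NormedAddCommGroup E] [NormedSpace ℝ E] [FiniteDimensional ℝ E]
  {Ψ : P × E → E} {t₀ : P} {a : E}

theorem exists_implicitFunction_of_det_ne_zero (hΨ : ContDiff ℝ 1 Ψ) (ha : Ψ (t₀, a) = 0)
    (hdet : (fderiv ℝ (fun z => Ψ (t₀, z)) a).det ≠ 0) :
    ∃ ψ : P → E, Tendsto ψ (𝓝 t₀) (𝓝 a) ∧ ∀ᶠ v in 𝓝 (t₀, a), (Ψ v = 0 ↔ ψ v.1 = v.2) ∧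
      Real.sign (fderiv ℝ (fun w => Ψ (v.1, w)) v.2).det =
        Real.sign (fderiv ℝ (fun w => Ψ (t₀, w)) a).det := by
  have hdiff : Differentiable ℝ Ψ := hΨ.differentiable one_ne_zero
  set D : P × E → ℝ := fun v => (fderiv ℝ Ψ v ∘L .inr ℝ P E).det
  have hD : ∀ t z, (fderiv ℝ (fun w => Ψ (t, w)) z).det = D (t, z) := fun t z => by
    rw [fderiv_comp_prodMk_right (hdiff _)]
  have hDcont : Continuous D :=
    ContinuousLinearMap.continuous_det.comp
      (((ContinuousLinearMap.compL ℝ E (P × E) E).flip (.inr ℝ P E)).continuous.comp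
        (hΨ.continuous_fderiv one_ne_zero))
  simp only [hD] at hdet ⊢
  have hstrict : HasStrictFDerivAt Ψ (fderiv ℝ Ψ (t₀, a)) (t₀, a) :=
    hΨ.contDiffAt.hasStrictFDerivAt one_ne_zero
  have hinv : (fderiv ℝ Ψ (t₀, a) ∘L .inr ℝ P E).IsInvertible :=
    ⟨_, ContinuousLinearMap.coe_toContinuousLinearEquivOfDetNeZero _ hdet⟩
  refine ⟨_, hstrict.tendsto_implicitFunctionOfProdDomain hinv, ?_⟩
  filter_upwards [hstrict.eventually_apply_eq_iff_implicitFunctionOfProdDomain hinv,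
    hDcont.continuousAt.eventually_sign_eq hdet] with v hψ hsign
  rw [ha] at hψ
  exact ⟨hψ, hsign⟩

theorem eventually_unique_zero_mem_closedBall_of_det_ne_zero (hΨ : ContDiff ℝ 1 Ψ) {δ : ℝ}
    (hδ : 0 < δ) (ha : Ψ (t₀, a) = 0) (hdet : (fderiv ℝ (fun z => Ψ (t₀, z)) a).det ≠ 0)
    (hisol : ∀ z ∈ closedBall a δ, Ψ (t₀, z) = 0 → z = a) :
    ∀ᶠ t in 𝓝 t₀, ∃ z ∈ closedBall a δ, Ψ (t, z) = 0 ∧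
      Real.sign (fderiv ℝ (fun w => Ψ (t, w)) z).det =
        Real.sign (fderiv ℝ (fun w => Ψ (t₀, w)) a).det ∧
      ∀ w ∈ closedBall a δ, Ψ (t, w) = 0 → w = z := by
  obtain ⟨ψ, hψ, hloc⟩ := exists_implicitFunction_of_det_ne_zero hΨ ha hdet
  obtain ⟨U, hU, V, hV, hUV⟩ := mem_nhds_prod_iff.1 hloc
  obtain ⟨ρ, hρ, hρV⟩ := Metric.mem_nhds_iff.1 hV
  set r := min ρ δ
  have hr : 0 < r := lt_min hρ hδ
  have hK : IsCompact (closedBall a δ \ ball a r) := (isCompact_closedBall a δ).diff isOpen_ball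
  have hK₀ : ∀ z ∈ closedBall a δ \ ball a r, Ψ (t₀, z) ≠ 0 := fun z hz hz₀ =>
    hz.2 (hisol z hz.1 hz₀ ▸ mem_ball_self hr)
  filter_upwards [hU, hK.eventually_forall_apply_ne hΨ.continuous hK₀,
    hψ.eventually (ball_mem_nhds a hr)] with t htU hfar hnear
  have hball : ∀ y ∈ ball a r, (Ψ (t, y) = 0 ↔ ψ t = y) ∧
      Real.sign (fderiv ℝ (fun w => Ψ (t, w)) y).det =
        Real.sign (fderiv ℝ (fun w => Ψ (t₀, w)) a).det := fun y hy =>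
    hUV ⟨htU, hρV (ball_subset_ball (min_le_left ρ δ) hy)⟩
  refine ⟨ψ t, closedBall_subset_closedBall (min_le_right ρ δ) (ball_subset_closedBall hnear),
    (hball _ hnear).1.2 rfl, (hball _ hnear).2, fun w hw hw₀ => ?_⟩
  by_cases hwr : w ∈ ball a r
  · exact ((hball w hwr).1.1 hw₀).symm
  · exact absurd hw₀ (hfar w ⟨hw, hwr⟩)

end Persistence

noncomputable def phiFamExt (q p : ℂ[X]) (m : ℕ) (x : ℂ × ℂ) : ℂ :=
  conj x.2 * (∑ i ∈ range m, (x.1 * conj x.2 + q.leadingCoeff) ^ i *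
      q.leadingCoeff ^ (m - 1 - i)) / (q.leadingCoeff ^ (m - 1) * m) * q.eval x.2 - p.eval x.2

theorem phiFamExt_of_ne_zero (q p : ℂ[X]) (m : ℕ) {t : ℂ} (ht : t ≠ 0) (z : ℂ) :
    phiFamExt q p m (t, z) = phiFam q p m t z := by
  rw [phiFamExt, phiFam, ← geom_sum₂_mul, add_sub_cancel_right, ← mul_div_mul_right _ _ ht]
  ring_nf

theorem phiFamExt_zero_left (q p : ℂ[X]) {m : ℕ} (hm : m ≠ 0) (hγ : q.leadingCoeff ≠ 0)
    (z : ℂ) : phiFamExt q p m (0, z) = lensFun q p z := by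
  have : q.leadingCoeff ^ (m - 1) * m ≠ 0 :=
    mul_ne_zero (pow_ne_zero _ hγ) (Nat.cast_ne_zero.2 hm)
  rw [phiFamExt, lensFun, zero_mul, zero_add, geom_sum₂_self, mul_comm (m : ℂ),
    mul_div_assoc, div_self this, mul_one]

theorem contDiff_phiFamExt (q p : ℂ[X]) (m : ℕ) {n : WithTop ℕ∞} :
    ContDiff ℝ n (phiFamExt q p m) := by
  have hpoly : ∀ r : ℂ[X], ContDiff ℝ n fun z : ℂ => r.eval z := fun r =>
    (r.contDiff_aeval (𝕜 := ℂ) n).restrict_scalars ℝ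
  have hconj : ContDiff ℝ n fun z : ℂ => conj z := conjCLE.contDiff
  unfold phiFamExt
  fun_prop

theorem phi_family_roots_near_original_roots_general
    (m k : ℕ) (hm : 1 ≤ m)
    (q p : Polynomial ℂ)
    (hγ : q.leadingCoeff ≠ 0)
    (α : Fin k → ℂ)
    (hroots : {z : ℂ | lensFun q p z = 0} = Set.range α)
    (hsimple : ∀ j, IsSimpleRoot (lensFun q p) (α j)) :
    ∀ δ : ℝ, 0 < δ → (∀ i j : Fin k, i ≠ j → 2 * δ < ‖α i - α j‖) →
      ∃ ε : ℝ, 0 < ε ∧ ∀ t : ℂ, 0 < ‖t‖ → ‖t‖ < ε → ∀ j : Fin k,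
        ∃ z : ℂ, ‖z - α j‖ ≤ δ ∧ phiFam q p m t z = 0 ∧
          IsSimpleRoot (phiFam q p m t) z ∧
          Real.sign (fderivDet (phiFam q p m t) z) =
            Real.sign (fderivDet (lensFun q p) (α j)) ∧
          ∀ w : ℂ, ‖w - α j‖ ≤ δ → phiFam q p m t w = 0 → w = z := by
  intro δ hδ hsep
  have hlens₀ (z : ℂ) : phiFamExt q p m (0, z) = lensFun q p z :=
    phiFamExt_zero_left q p (by omega) hγ z
  have hlens : (fun z => phiFamExt q p m (0, z)) = lensFun q p := funext hlens₀
  have hisol (j : Fin k) : ∀ z ∈ closedBall (α j) δ, lensFun q p z = 0 → z = α j := by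
    intro z hz hz₀
    obtain ⟨i, rfl⟩ : z ∈ Set.range α := hroots ▸ hz₀
    by_contra hij
    linarith [hsep i j (fun h => hij (congrArg α h)), mem_closedBall_iff_norm.1 hz]
  have hpersist (j : Fin k) := eventually_unique_zero_mem_closedBall_of_det_ne_zero (t₀ := 0)
    (contDiff_phiFamExt q p m) hδ (by rw [hlens₀]; exact (hsimple j).1)
    (by rw [hlens]; exact (isSimpleRoot_iff_fderivDet_ne_zero.1 (hsimple j)).2)
    (by simpa only [hlens₀] using hisol j)
  obtain ⟨ε, hε, hsmall⟩ := Metric.eventually_nhds_iff.1 (eventually_all.2 hpersist)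
  refine ⟨ε, hε, fun t ht₀ htε j => ?_⟩
  obtain ⟨z, hz, hz₀, hsign, huniq⟩ := hsmall (by simpa using htε) j
  rw [hlens] at hsign
  have hφ : phiFam q p m t = fun w => phiFamExt q p m (t, w) :=
    funext fun w => (phiFamExt_of_ne_zero q p m (norm_pos_iff.1 ht₀) w).symm
  rw [hφ]
  exact ⟨z, mem_closedBall_iff_norm.1 hz, hz₀, (hsimple j).of_sign_fderivDet_eq hz₀ hsign, hsign,
    fun w hw => huniq w (mem_closedBall_iff_norm.2 hw)⟩

/-- Persistence of the roots of the Lens polynomial `ℓ` in the bifurcation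
family `φ_t`: for every small enough `δ > 0` (smaller than half the minimal
distance between the distinct roots `α_j` of `ℓ`) and every small enough
`t ≠ 0`, the function `φ_t` has exactly one root in each closed disk of radius
`δ` around `α_j`; this root is simple and has the same sign as `α_j`. -/
theorem phi_family_roots_near_original_roots
    (n m k : ℕ) (hn : 2 ≤ n) (hm : 1 ≤ m)
    (q p : Polynomial ℂ) (hq : q.natDegree = n) (hp : p.degree ≤ (n : ℕ))
    (hγ : q.leadingCoeff ≠ 0)
    (α : Fin k → ℂ) (hαinj : Function.Injective α)
    (hroots : {z : ℂ | lensFun q p z = 0} = Set.range α)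
    (hsimple : ∀ j, IsSimpleRoot (lensFun q p) (α j)) :
    ∀ δ : ℝ, 0 < δ → (∀ i j : Fin k, i ≠ j → 2 * δ < ‖α i - α j‖) →
      ∃ ε : ℝ, 0 < ε ∧ ∀ t : ℂ, 0 < ‖t‖ → ‖t‖ < ε → ∀ j : Fin k,
        ∃ z : ℂ, ‖z - α j‖ ≤ δ ∧ phiFam q p m t z = 0 ∧
          IsSimpleRoot (phiFam q p m t) z ∧
          Real.sign (fderivDet (phiFam q p m t) z) =
            Real.sign (fderivDet (lensFun q p) (α j)) ∧
          ∀ w : ℂ, ‖w - α j‖ ≤ δ → phiFam q p m t w = 0 → w = z :=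
  phi_family_roots_near_original_roots_general m k hm q p hγ α hroots hsimple
end

section
/- Let n > m ≥ 1 be integers and let f : ℂ → ℂ be given by f(z) = (conj z)^m · z^n − 1. Then f has exactly n − m roots (namely the (n−m)-th roots of unity), and every root of f is a simple positive root. In particular ρ(f) = n − m, so the minimal possible value n − m of ρ is attained within the class of generalized Lens polynomials of type (n, m). -/
open Complex Polynomial

/-!
On the unit circle `conj z = z⁻¹`, so `conj z ^ m * z ^ n = z ^ (n - m)`; off it the modulus
of the left side is `‖z‖ ^ (m + n) ≠ 1`. Hence the roots are the `(n - m)`-th roots of unity.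
The real derivative at a root is `z ↦ a z + b (conj z)` with `|a| = n` and `|b| = m`, whose
determinant is `|a|² - |b|² = n² - m² > 0`.
-/

open ComplexConjugate

theorem conj_pow_mul_pow_eq_one_iff {m n : ℕ} (hmn : m < n) (z : ℂ) :
    conj z ^ m * z ^ n = 1 ↔ z ^ (n - m) = 1 := by
  have hfactor : conj z ^ m * z ^ n = (‖z‖ ^ 2 : ℂ) ^ m * z ^ (n - m) := by
    conv_lhs => rw [← Nat.add_sub_cancel' hmn.le, pow_add, ← mul_assoc, ← mul_pow, conj_mul']
  constructor
  · intro h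
    have hnorm : ‖z‖ = 1 := by
      have hpow : ‖z‖ ^ (m + n) = 1 := by
        simpa [norm_pow, norm_conj, ← pow_add] using congrArg norm h
      exact (pow_eq_one_iff_of_nonneg (norm_nonneg z) (by omega)).mp hpow
    simpa [hfactor, hnorm] using h
  · intro h
    have hnorm : ‖z‖ = 1 := norm_eq_one_of_pow_eq_one h (by omega)
    simp [hfactor, hnorm, h]

theorem setOf_pow_eq_one_eq_nthRootsFinset {k : ℕ} (hk : 0 < k) :
    {z : ℂ | z ^ k = 1} = nthRootsFinset k (1 : ℂ) := by
  ext z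
  simp [mem_nthRootsFinset hk]

theorem hasFDerivAt_conj_pow_mul_pow (m n : ℕ) (α : ℂ) :
    HasFDerivAt (fun z => conj z ^ m * z ^ n)
      ((conj α ^ m * (n * α ^ (n - 1))) • ContinuousLinearMap.id ℝ ℂ +
        (α ^ n * (m * conj α ^ (m - 1))) • conjCLE.toContinuousLinearMap) α := by
  have hconj : HasFDerivAt (fun z => conj z ^ m) _ α := (conjCLE.hasFDerivAt (x := α)).pow m
  refine (hconj.fun_mul (hasFDerivAt_pow (𝕜 := ℝ) n)).congr_fderiv ?_
  simp only [conjCLE_apply, nsmul_eq_mul, smul_smul]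

theorem det_smul_id_add_smul_conj (a b : ℂ) :
    LinearMap.det ((a • ContinuousLinearMap.id ℝ ℂ +
      b • conjCLE.toContinuousLinearMap : ℂ →L[ℝ] ℂ) : ℂ →ₗ[ℝ] ℂ) = normSq a - normSq b := by
  rw [← LinearMap.det_toMatrix basisOneI, Matrix.det_fin_two]
  simp only [ContinuousLinearMap.toLinearMap_add, ContinuousLinearMap.toLinearMap_smul,
    ContinuousLinearMap.coe_id, ContinuousLinearEquiv.toLinearMap_toContinuousLinearMap,
    conjCLE_toLinearEquiv, LinearMap.toMatrix_apply, coe_basisOneI, Matrix.cons_val_zero,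
    LinearMap.add_apply, LinearMap.smul_apply, LinearMap.id_coe, id_eq, smul_eq_mul, mul_one,
    AlgEquiv.toLinearMap_apply, conjAe_coe, map_one, map_add, Finsupp.coe_add, coe_basisOneI_repr,
    Pi.add_apply, Matrix.cons_val_one, Matrix.cons_val_fin_one, conj_I, mul_neg, map_neg, mul_re,
    I_re, mul_zero, I_im, zero_sub, mul_im, add_zero, Finsupp.coe_neg, Matrix.neg_cons, neg_neg,
    Matrix.neg_empty, normSq_apply]
  ring

theorem fderivDet_conj_pow_mul_pow_sub_one (m n : ℕ) {α : ℂ} (hα : ‖α‖ = 1) :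
    fderivDet (fun z => conj z ^ m * z ^ n - 1) α = n ^ 2 - m ^ 2 := by
  rw [fderivDet, ((hasFDerivAt_conj_pow_mul_pow m n α).sub_const 1).fderiv,
    det_smul_id_add_smul_conj]
  simp [normSq_eq_norm_sq, hα]

theorem isSimpleRoot_of_fderivDet_ne_zero {f : ℂ → ℂ} {α : ℂ} (hα : f α = 0)
    (hdet : fderivDet f α ≠ 0) : IsSimpleRoot f α :=
  ⟨hα, (Module.End.isUnit_iff _).mp ((LinearMap.isUnit_iff_isUnit_det _).mpr hdet.isUnit)⟩

theorem generalized_lens_minimal_root_count_general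
    (n m : ℕ) (hmn : m < n)
    (f : ℂ → ℂ) (hf : f = fun z => ((starRingEnd ℂ) z) ^ m * z ^ n - 1) :
    {z : ℂ | f z = 0} = {z : ℂ | z ^ (n - m) = 1} ∧
    ({z : ℂ | f z = 0}).Finite ∧
    ({z : ℂ | f z = 0}).ncard = n - m ∧
    ∀ α : ℂ, f α = 0 → IsSimpleRoot f α ∧ 0 < fderivDet f α := by
  have hk : 0 < n - m := Nat.sub_pos_of_lt hmn
  have hroots : {z : ℂ | f z = 0} = {z : ℂ | z ^ (n - m) = 1} := by
    ext z
    simp only [Set.mem_ofPred_eq, hf, sub_eq_zero]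
    exact conj_pow_mul_pow_eq_one_iff hmn z
  have hpos : ∀ α : ℂ, f α = 0 → 0 < fderivDet f α := by
    intro α hα
    have hnorm : ‖α‖ = 1 :=
      norm_eq_one_of_pow_eq_one (hroots.subset hα) hk.ne'
    rw [hf, fderivDet_conj_pow_mul_pow_sub_one m n hnorm, sub_pos]
    exact_mod_cast Nat.pow_lt_pow_left hmn two_ne_zero
  rw [hroots, setOf_pow_eq_one_eq_nthRootsFinset hk]
  refine ⟨rfl, Finset.finite_toSet _, ?_, fun α hα => ⟨?_, hpos α hα⟩⟩
  · rw [Set.ncard_coe_finset, (isPrimitiveRoot_exp (n - m) hk.ne').card_nthRootsFinset]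
  · exact isSimpleRoot_of_fderivDet_ne_zero hα (hpos α hα).ne'

/-- The generalized Lens polynomial `f(z) = (conj z)^m z^n - 1` with
`n > m ≥ 1` has exactly the `(n-m)`-th roots of unity as roots, so exactly
`n - m` roots, and all of them are simple positive roots. -/
theorem generalized_lens_minimal_root_count
    (n m : ℕ) (hm : 1 ≤ m) (hmn : m < n)
    (f : ℂ → ℂ) (hf : f = fun z => ((starRingEnd ℂ) z) ^ m * z ^ n - 1) :
    {z : ℂ | f z = 0} = {z : ℂ | z ^ (n - m) = 1} ∧
    ({z : ℂ | f z = 0}).Finite ∧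
    ({z : ℂ | f z = 0}).ncard = n - m ∧
    ∀ α : ℂ, f α = 0 → IsSimpleRoot f α ∧ 0 < fderivDet f α :=
  generalized_lens_minimal_root_count_general n m hmn f hf
end

section
/- Let n ≥ 1 and m ≥ 1 be integers, let q, p be complex polynomials with deg q = n and deg p ≤ n, and let γ ≠ 0 be the leading coefficient of q. Fix t ∈ ℂ, t ≠ 0, and define φ_t(z) = (((t·conj z + γ)^m − γ^m)/(γ^{m−1}·m·t))·q(z) − p(z). Then there exist complex polynomials Q and P with deg Q = n and deg P ≤ n such that for all z ∈ ℂ, γ^{m−1}·m·t·φ_t(z) = (conj u)^m · Q(u) − P(u), where u = conj(t)·z + conj(γ). In other words, in the affine coordinate u, the function φ_t is (a nonzero constant multiple of) a generalized Lens polynomial of type (n, m). -/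
open Complex Polynomial

theorem Polynomial.exists_natDegree_eq_eval_affine {K : Type*} [Field K] {a : K} (ha : a ≠ 0)
    (b : K) (r : K[X]) :
    ∃ R : K[X], R.natDegree = r.natDegree ∧ ∀ z, R.eval (a * z + b) = r.eval z := by
  refine ⟨r.comp (C a⁻¹ * (X - C b)), ?_, fun z => ?_⟩
  · rw [natDegree_comp, natDegree_C_mul (inv_ne_zero ha), natDegree_X_sub_C, mul_one]
  · simp [eval_comp, ha]

theorem phi_family_is_generalized_lens_general
    (n m : ℕ) (hm : 1 ≤ m)
    (q p : Polynomial ℂ) (hq : q.natDegree = n) (hp : p.degree ≤ (n : ℕ))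
    (hγ : q.leadingCoeff ≠ 0) (t : ℂ) (ht : t ≠ 0) :
    ∃ Q P : Polynomial ℂ, Q.natDegree = n ∧ P.degree ≤ (n : ℕ) ∧
      ∀ z : ℂ,
        q.leadingCoeff ^ (m - 1) * (m : ℂ) * t * phiFam q p m t z =
          ((starRingEnd ℂ)
              ((starRingEnd ℂ) t * z + (starRingEnd ℂ) q.leadingCoeff)) ^ m *
            Q.eval ((starRingEnd ℂ) t * z + (starRingEnd ℂ) q.leadingCoeff)
          - P.eval ((starRingEnd ℂ) t * z + (starRingEnd ℂ) q.leadingCoeff) := by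
  set γ := q.leadingCoeff
  have hd : γ ^ (m - 1) * (m : ℂ) * t ≠ 0 :=
    mul_ne_zero (mul_ne_zero (pow_ne_zero _ hγ) (by norm_cast; omega)) ht
  have hct : (starRingEnd ℂ) t ≠ 0 := (_root_.map_ne_zero _).2 ht
  obtain ⟨Q, hQ, hQ_eval⟩ := exists_natDegree_eq_eval_affine hct ((starRingEnd ℂ) γ) q
  obtain ⟨R, hR, hR_eval⟩ := exists_natDegree_eq_eval_affine hct ((starRingEnd ℂ) γ) p
  -- Since `conj u = t * conj z + γ`, the numerator of `φ_t` is `conj u ^ m - γ ^ m`.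
  refine ⟨Q, C (γ ^ m) * Q + C (γ ^ (m - 1) * m * t) * R, hQ.trans hq, ?_, fun z => ?_⟩
  · rw [← natDegree_le_iff_degree_le] at hp ⊢
    exact natDegree_add_le_of_degree_le (natDegree_C_mul_le _ _ |>.trans (hQ.trans hq).le)
      (natDegree_C_mul_le _ _ |>.trans (hR.trans_le hp))
  · have hconj : (starRingEnd ℂ) ((starRingEnd ℂ) t * z + (starRingEnd ℂ) γ) =
        t * (starRingEnd ℂ) z + γ := by simp [mul_comm]
    simp only [phiFam, eval_add, eval_mul, eval_C, hQ_eval, hR_eval, hconj]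
    rw [mul_sub, ← mul_assoc, mul_div_cancel₀ _ hd]
    ring

/-- In the affine coordinate `u = conj t * z + conj γ`, the function
`γ^(m-1) m t φ_t` is a generalized Lens polynomial of type `(n, m)`. -/
theorem phi_family_is_generalized_lens
    (n m : ℕ) (hn : 1 ≤ n) (hm : 1 ≤ m)
    (q p : Polynomial ℂ) (hq : q.natDegree = n) (hp : p.degree ≤ (n : ℕ))
    (hγ : q.leadingCoeff ≠ 0) (t : ℂ) (ht : t ≠ 0) :
    ∃ Q P : Polynomial ℂ, Q.natDegree = n ∧ P.degree ≤ (n : ℕ) ∧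
      ∀ z : ℂ,
        q.leadingCoeff ^ (m - 1) * (m : ℂ) * t * phiFam q p m t z =
          ((starRingEnd ℂ)
              ((starRingEnd ℂ) t * z + (starRingEnd ℂ) q.leadingCoeff)) ^ m *
            Q.eval ((starRingEnd ℂ) t * z + (starRingEnd ℂ) q.leadingCoeff)
          - P.eval ((starRingEnd ℂ) t * z + (starRingEnd ℂ) q.leadingCoeff) :=
  phi_family_is_generalized_lens_general n m hm q p hq hp hγ t ht
end
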